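/- Let ω be a primitive cube root of unity in ℂ. Then G(ω) is isomorphic to the direct product SL(2, 𝔽₃) × C₃, where C₃ denotes the cyclic group of order 3; in particular G(ω) has order 72. -/

import Mathlib

noncomputable def Rmat (ζ : ℂ) : Matrix (Fin 2) (Fin 2) ℂ := !![ζ, 1; 0, 1]

noncomputable def Smat (ζ : ℂ) : Matrix (Fin 2) (Fin 2) ℂ := !![0, -ζ⁻¹; 1, 0]

noncomputable def G (ζ : ℂ) : Subgroup (Matrix.GeneralLinearGroup (Fin 2) ℂ) :=
  Subgroup.closure {A : Matrix.GeneralLinearGroup (Fin 2) ℂ |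
    (A : Matrix (Fin 2) (Fin 2) ℂ) = Rmat ζ ∨ (A : Matrix (Fin 2) (Fin 2) ℂ) = Smat ζ}

/-- The subgroup of `GL(2, ℂ)` consisting of matrices of determinant `1`. -/
noncomputable def detOne : Subgroup (Matrix.GeneralLinearGroup (Fin 2) ℂ) where
  carrier := {M | (M : Matrix (Fin 2) (Fin 2) ℂ).det = 1}
  one_mem' := by simp
  mul_mem' := by
    intro a b ha hb
    simp only [Set.mem_setOf_eq, Units.val_mul, Matrix.det_mul] at *
    rw [ha, hb, one_mul]
  inv_mem' := by
    intro a ha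
    simp only [Set.mem_setOf_eq] at *
    have h : ((a⁻¹ : (Matrix (Fin 2) (Fin 2) ℂ)ˣ) : Matrix (Fin 2) (Fin 2) ℂ).det *
        ((a : Matrix (Fin 2) (Fin 2) ℂ)).det = 1 := by
      rw [← Matrix.det_mul, ← Units.val_mul, inv_mul_cancel, Units.val_one, Matrix.det_one]
    rw [ha, mul_one] at h
    exact h

/-!
Over `ℤ[ω]` the generators are `R = [[ω, 1], [0, 1]]` and `S = [[0, 1 + ω], [1, 0]]`, since
`-ω⁻¹ = 1 + ω`; as `ℤ[ω]` embeds in `ℂ`, `G(ω)` is isomorphic to the subgroup `G₀` of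
`GL(2, ℤ[ω])` they generate. The products of at most ten factors from `{1, R, S}` form a
finite set closed under right multiplication by `R` and `S`, hence also by `R⁻¹` and `S⁻¹`,
so this set is all of `G₀`; it has 72 elements. Determinants of elements of `G₀` are powers
of `ω`, so reduction modulo the prime `1 - ω` (that is, `ω ↦ 1` in `𝔽₃`) maps `G₀` to
`SL(2, 𝔽₃)`, and the determinant maps `G₀` to `μ₃ ≅ C₃`. An element killed by both is
congruent to `1` modulo `1 - ω` with determinant `1`, and inspection of the 72 elements
shows it is the identity. Hence `G₀` embeds in `SL(2, 𝔽₃) × C₃`, which also has 72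
elements.
-/

open Pointwise

theorem Subgroup.coe_closure_eq_pow_of_pow_succ_eq {G : Type*} [Group G] [DecidableEq G]
    {s : Finset G} {n : ℕ} (h : insert 1 s ^ (n + 1) = insert 1 s ^ n) :
    (Subgroup.closure (s : Set G) : Set G) = ↑(insert 1 s ^ n) := by
  set V := insert 1 s ^ n
  have mul_mem : ∀ v ∈ V, ∀ a ∈ s, v * a ∈ V := fun v hv a ha => by
    rw [← h, pow_succ]
    exact Finset.mul_mem_mul hv (Finset.mem_insert_of_mem ha)
  have mul_inv_mem : ∀ v ∈ V, ∀ a ∈ s, v * a⁻¹ ∈ V := fun v hv a ha => by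
    have hVa : V * {a} = V := Finset.eq_of_subset_of_card_le
      (fun x hx => by
        obtain ⟨w, hw, b, hb, rfl⟩ := Finset.mem_mul.1 hx
        rw [Finset.mem_singleton.1 hb]
        exact mul_mem w hw a ha)
      (Finset.card_mul_singleton V a).ge
    obtain ⟨w, hw, b, hb, rfl⟩ := Finset.mem_mul.1 (hVa.symm ▸ hv)
    rw [Finset.mem_singleton.1 hb, mul_inv_cancel_right]
    exact hw
  refine subset_antisymm (fun x hx => ?_) ?_
  · induction hx using Subgroup.closure_induction_right with
    | one => exact Finset.one_mem_pow (Finset.mem_insert_self 1 s)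
    | mul_right x _ a ha hx => exact mul_mem x hx a ha
    | mul_inv_cancel x _ a ha hx => exact mul_inv_mem x hx a ha
  · rw [Finset.coe_pow, Finset.coe_insert, ← Subgroup.closure_insert_one]
    exact Subgroup.subset_closure.trans (Subgroup.closure_pow_le (n := n))

def MonoidHom.toSpecialLinearGroup {H n R : Type*} [MulOneClass H] [Fintype n] [DecidableEq n]
    [CommRing R] (f : H →* Matrix.GeneralLinearGroup n R)
    (hf : ∀ h, (f h : Matrix n n R).det = 1) : H →* Matrix.SpecialLinearGroup n R where
  toFun h := ⟨f h, hf h⟩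
  map_one' := by ext1; simp
  map_mul' _ _ := Subtype.ext (by simp only [map_mul, Units.val_mul]; rfl)

theorem neg_inv_eq_one_add_of_sq_add_self_add_one {K : Type*} [Field K] {w : K}
    (hw : w ^ 2 + w + 1 = 0) : -w⁻¹ = 1 + w := by
  have hw0 : w ≠ 0 := by
    rintro rfl
    norm_num at hw
  field_simp
  linear_combination -hw

-- `⟨a, b⟩` stands for `a + b ω`, with `ω ^ 2 = -1 - ω`.
@[ext]
structure EisensteinInt where
  re : ℤ
  im : ℤ
deriving DecidableEq

namespace EisensteinInt

instance : Zero EisensteinInt := ⟨⟨0, 0⟩⟩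
instance : One EisensteinInt := ⟨⟨1, 0⟩⟩
instance : Add EisensteinInt := ⟨fun x y => ⟨x.re + y.re, x.im + y.im⟩⟩
instance : Neg EisensteinInt := ⟨fun x => ⟨-x.re, -x.im⟩⟩
instance : Mul EisensteinInt :=
  ⟨fun x y => ⟨x.re * y.re - x.im * y.im, x.re * y.im + x.im * y.re - x.im * y.im⟩⟩

@[simp] theorem add_re (x y : EisensteinInt) : (x + y).re = x.re + y.re := rfl
@[simp] theorem add_im (x y : EisensteinInt) : (x + y).im = x.im + y.im := rfl
@[simp] theorem mul_re (x y : EisensteinInt) : (x * y).re = x.re * y.re - x.im * y.im := rfl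
@[simp] theorem mul_im (x y : EisensteinInt) :
    (x * y).im = x.re * y.im + x.im * y.re - x.im * y.im := rfl
@[simp] theorem neg_re (x : EisensteinInt) : (-x).re = -x.re := rfl
@[simp] theorem neg_im (x : EisensteinInt) : (-x).im = -x.im := rfl
@[simp] theorem zero_re : (0 : EisensteinInt).re = 0 := rfl
@[simp] theorem zero_im : (0 : EisensteinInt).im = 0 := rfl
@[simp] theorem one_re : (1 : EisensteinInt).re = 1 := rfl
@[simp] theorem one_im : (1 : EisensteinInt).im = 0 := rfl

instance : CommRing EisensteinInt where
  nsmul := nsmulRec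
  zsmul := zsmulRec
  add_assoc _ _ _ := by ext <;> simp <;> ring
  zero_add _ := by ext <;> simp
  add_zero _ := by ext <;> simp
  add_comm _ _ := by ext <;> simp <;> ring
  neg_add_cancel _ := by ext <;> simp
  left_distrib _ _ _ := by ext <;> simp <;> ring
  right_distrib _ _ _ := by ext <;> simp <;> ring
  zero_mul _ := by ext <;> simp
  mul_zero _ := by ext <;> simp
  mul_assoc _ _ _ := by ext <;> simp <;> ring
  one_mul _ := by ext <;> simp
  mul_one _ := by ext <;> simp
  mul_comm _ _ := by ext <;> simp <;> ring

def ω : EisensteinInt := ⟨0, 1⟩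

def lift {R : Type*} [CommRing R] (w : R) (hw : w ^ 2 + w + 1 = 0) : EisensteinInt →+* R where
  toFun x := x.re + x.im * w
  map_one' := by simp
  map_zero' := by simp
  map_add' x y := by push_cast [add_re, add_im]; ring
  map_mul' x y := by
    push_cast [mul_re, mul_im]
    linear_combination (-(x.im : R)) * y.im * hw

@[simp] theorem lift_apply {R : Type*} [CommRing R] (w : R) (hw : w ^ 2 + w + 1 = 0)
    (x : EisensteinInt) : lift w hw x = x.re + x.im * w := rfl

theorem lift_injective {R : Type*} [CommRing R] [CharZero R] (w : R) (hw : w ^ 2 + w + 1 = 0) :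
    Function.Injective (lift w hw) := by
  refine (injective_iff_map_eq_zero _).2 fun x hx => ?_
  rw [lift_apply] at hx
  have hnorm : ((x.re ^ 2 - x.re * x.im + x.im ^ 2 : ℤ) : R) = 0 := by
    push_cast
    linear_combination (x.re - x.im - x.im * w) * hx + x.im ^ 2 * hw
  have hnorm' : x.re ^ 2 - x.re * x.im + x.im ^ 2 = 0 := by exact_mod_cast hnorm
  ext <;> simp only [zero_re, zero_im] <;>
    nlinarith [sq_nonneg (x.re - x.im), sq_nonneg (x.re + x.im)]

def ωUnit : EisensteinIntˣ := ⟨ω, ω ^ 2, by decide, by decide⟩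

theorem isPrimitiveRoot_ωUnit : IsPrimitiveRoot ωUnit 3 := by
  refine IsPrimitiveRoot.mk_of_lt _ (by norm_num) (by decide) fun l hl hl3 => ?_
  interval_cases l <;> decide

/-- Reduction modulo the prime `1 - ω` above `3`. -/
def reduceMod3 : EisensteinInt →+* ZMod 3 := lift 1 (by decide)

open Matrix

theorem map_lift_injective {n R : Type*} [Fintype n] [DecidableEq n] [CommRing R] [CharZero R]
    (w : R) (hw : w ^ 2 + w + 1 = 0) :
    Function.Injective (GeneralLinearGroup.map (n := n) (lift w hw)) :=
  Units.map_injective (Matrix.map_injective (lift_injective w hw))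

def R₀ : GL (Fin 2) EisensteinInt :=
  ⟨!![ω, 1; 0, 1], !![ω ^ 2, -ω ^ 2; 0, 1], by decide, by decide⟩

def S₀ : GL (Fin 2) EisensteinInt :=
  ⟨!![0, 1 + ω; 1, 0], !![0, 1; -ω, 0], by decide, by decide⟩

def G₀ : Subgroup (GL (Fin 2) EisensteinInt) := Subgroup.closure {R₀, S₀}

theorem det_R₀ : GeneralLinearGroup.det R₀ = ωUnit := by ext1; decide
theorem det_S₀ : GeneralLinearGroup.det S₀ = ωUnit ^ 2 := by ext1; decide

theorem det_mem_zpowers {g : GL (Fin 2) EisensteinInt} (hg : g ∈ G₀) :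
    GeneralLinearGroup.det g ∈ Subgroup.zpowers ωUnit := by
  refine (Subgroup.closure_le (K := (Subgroup.zpowers ωUnit).comap GeneralLinearGroup.det)).2 ?_ hg
  rintro x (rfl | rfl)
  · exact ⟨1, by simp [det_R₀]⟩
  · exact ⟨2, by simp [det_S₀]⟩

theorem reduceMod3_det_eq_one {g : GL (Fin 2) EisensteinInt} (hg : g ∈ G₀) :
    reduceMod3 (g : Matrix (Fin 2) (Fin 2) EisensteinInt).det = 1 := by
  obtain ⟨k, hk⟩ := det_mem_zpowers hg
  have hω : Units.map (reduceMod3 : EisensteinInt →* ZMod 3) ωUnit = 1 := Units.ext (by decide)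
  have hdet := congrArg Units.val
    (show Units.map (reduceMod3 : EisensteinInt →* ZMod 3) (GeneralLinearGroup.det g) = 1 by
      rw [← hk, map_zpow, hω, _root_.one_zpow])
  simpa using hdet

def reductionHom : G₀ →* SpecialLinearGroup (Fin 2) (ZMod 3) :=
  ((GeneralLinearGroup.map reduceMod3).comp G₀.subtype).toSpecialLinearGroup fun g => by
    simpa [GeneralLinearGroup.map, RingHom.map_det] using reduceMod3_det_eq_one g.2

noncomputable def detLog : G₀ →* Multiplicative (ZMod 3) :=
  (AddEquiv.toMultiplicativeRight isPrimitiveRoot_ωUnit.zmodEquivZPowers.symm).toMonoidHom.comp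
    ((GeneralLinearGroup.det.comp G₀.subtype).codRestrict _ fun g => det_mem_zpowers g.2)

-- `10` is the least exponent at which these powers stabilise.
def G₀Elems : Finset (GL (Fin 2) EisensteinInt) := {1, R₀, S₀} ^ 10

theorem pow_succ_G₀Elems :
    ({1, R₀, S₀} : Finset (GL (Fin 2) EisensteinInt)) ^ (10 + 1) = G₀Elems := by
  decide +kernel

theorem card_G₀Elems : G₀Elems.card = 72 := by decide +kernel

-- The determinant is written out so that the kernel can evaluate it.
theorem eq_one_of_mem_G₀Elems : ∀ g ∈ G₀Elems,
    (g : Matrix (Fin 2) (Fin 2) EisensteinInt).map reduceMod3 = 1 →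
    g 0 0 * g 1 1 - g 0 1 * g 1 0 = 1 → g = 1 := by
  decide +kernel

theorem coe_G₀ : (G₀ : Set (GL (Fin 2) EisensteinInt)) = G₀Elems := by
  rw [G₀, ← Finset.coe_pair]
  exact Subgroup.coe_closure_eq_pow_of_pow_succ_eq pow_succ_G₀Elems

theorem card_G₀ : Nat.card G₀ = 72 := by
  rw [← SetLike.coe_sort_coe, coe_G₀, Nat.card_coe_set_eq, Set.ncard_coe_finset,
    card_G₀Elems]

noncomputable def toProd :
    G₀ →* SpecialLinearGroup (Fin 2) (ZMod 3) × Multiplicative (ZMod 3) :=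
  reductionHom.prod detLog

theorem toProd_injective : Function.Injective toProd := by
  refine (injective_iff_map_eq_one _).2 fun g hg => ?_
  obtain ⟨hred, hlog⟩ := Prod.ext_iff.1 hg
  have hmod : (g.1 : Matrix (Fin 2) (Fin 2) EisensteinInt).map reduceMod3 = 1 :=
    congrArg Subtype.val hred
  have hdet : (g.1 : Matrix (Fin 2) (Fin 2) EisensteinInt).det = 1 := by
    have hlog' : detLog g = 1 := hlog
    simp only [detLog, MonoidHom.comp_apply, MulEquiv.coe_toMonoidHom,
      MulEquiv.map_eq_one_iff] at hlog'
    simpa [Units.ext_iff] using congrArg Subtype.val hlog'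
  rw [det_fin_two] at hdet
  refine Subtype.ext (eq_one_of_mem_G₀Elems g ?_ hmod hdet)
  rw [← Finset.mem_coe, ← coe_G₀]
  exact g.2

theorem card_specialLinearGroup_prod :
    Nat.card (SpecialLinearGroup (Fin 2) (ZMod 3) × Multiplicative (ZMod 3)) = 72 := by
  rw [Nat.card_prod, Nat.card_eq_fintype_card, Nat.card_eq_fintype_card]
  decide +kernel

theorem toProd_bijective : Function.Bijective toProd :=
  toProd_injective.bijective_of_nat_card_le (card_specialLinearGroup_prod.trans card_G₀.symm).le

end EisensteinInt

theorem G_eq_map_G₀ (ω : ℂ) (hω : ω ^ 2 + ω + 1 = 0) :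
    G ω = EisensteinInt.G₀.map (Matrix.GeneralLinearGroup.map (EisensteinInt.lift ω hω)) := by
  have hR : (Matrix.GeneralLinearGroup.map (EisensteinInt.lift ω hω) EisensteinInt.R₀ :
      Matrix (Fin 2) (Fin 2) ℂ) = Rmat ω := by
    ext i j
    fin_cases i <;> fin_cases j <;> simp [EisensteinInt.R₀, EisensteinInt.ω, Rmat]
  have hS : (Matrix.GeneralLinearGroup.map (EisensteinInt.lift ω hω) EisensteinInt.S₀ :
      Matrix (Fin 2) (Fin 2) ℂ) = Smat ω := by
    ext i j
    fin_cases i <;> fin_cases j <;>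
      simp [EisensteinInt.S₀, EisensteinInt.ω, Smat,
        neg_inv_eq_one_add_of_sq_add_self_add_one hω]
  rw [EisensteinInt.G₀, MonoidHom.map_closure, Set.image_pair, G]
  congr 1
  ext A
  simp [Units.ext_iff, hR, hS]

theorem G_omega_structure (ω : ℂ) (hω : IsPrimitiveRoot ω 3) :
    Nonempty (↥(G ω) ≃*
      Matrix.SpecialLinearGroup (Fin 2) (ZMod 3) × Multiplicative (ZMod 3)) ∧
    Nat.card ↥(G ω) = 72 := by
  have hω2 : ω ^ 2 + ω + 1 = 0 := by
    have := hω.geom_sum_eq_zero (by norm_num)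
    simp only [Finset.sum_range_succ, Finset.sum_range_zero] at this
    linear_combination this
  let e : G ω ≃* EisensteinInt.G₀ := (MulEquiv.subgroupCongr (G_eq_map_G₀ ω hω2)).trans
    (EisensteinInt.G₀.equivMapOfInjective _ (EisensteinInt.map_lift_injective ω hω2)).symm
  exact ⟨⟨e.trans (MulEquiv.ofBijective _ EisensteinInt.toProd_bijective)⟩,
    (Nat.card_congr e.toEquiv).trans EisensteinInt.card_G₀⟩
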